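/- arXiv:2001.01261 — 3 statements merged into one kernel-verified Lean document; each statement's English description precedes it below -/
import Mathlib

section
/- Let a, b, h be real numbers with 0 ≤ h, a - a²h² - b² > 0, a - b² ≥ 0, and b ≠ 0. Then h(a - b²)(4a²h⁴ - 8ah² + 3) - 4b⁴h³ + (4a²h⁴ - 1)√(a - a²h² - b²) ≤ 0. -/
theorem appendixA_sign_estimate
    (a b h : ℝ) (hh : 0 ≤ h) (hpos : 0 < a - a ^ 2 * h ^ 2 - b ^ 2)
    (hab : 0 ≤ a - b ^ 2) (hb : b ≠ 0) :
    h * (a - b ^ 2) * (4 * a ^ 2 * h ^ 4 - 8 * a * h ^ 2 + 3) - 4 * b ^ 4 * h ^ 3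
      + (4 * a ^ 2 * h ^ 4 - 1) * Real.sqrt (a - a ^ 2 * h ^ 2 - b ^ 2) ≤ 0 := by
  set s := Real.sqrt (a - a ^ 2 * h ^ 2 - b ^ 2) with hs_def
  have hs0 : 0 ≤ s := Real.sqrt_nonneg _
  have hsq : s ^ 2 = a - a ^ 2 * h ^ 2 - b ^ 2 := Real.sq_sqrt hpos.le
  have hid : h * (a - b ^ 2) * (4 * a ^ 2 * h ^ 4 - 8 * a * h ^ 2 + 3) - 4 * b ^ 4 * h ^ 3
      + (4 * a ^ 2 * h ^ 4 - 1) * s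
      = -((1 - 2 * h * s) ^ 2 * (s + h * s ^ 2 + a ^ 2 * h ^ 3)) := by
    linear_combination (4 * h ^ 3 * s ^ 2 - 3 * h + 4 * a * h ^ 3 - 4 * b ^ 2 * h ^ 3) * hsq
  rw [hid, neg_nonpos]
  positivity
end

section
/- Let a, b, h ∈ ℝ with 0 < a ≤ 1, 0 ≤ h ≤ 1, b ≠ 0, and a²h⁴ + b²h² > 0 and 1 - 2ah² + a²h⁴ + b²h² > 0. Then 2a²h⁴ + 2b²h² - 2ah² + 2√(a²h⁴ + b²h²)·√(1 - 2ah² + a²h⁴ + b²h²) > 0. -/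
theorem appendixB_positivity
    (a b h : ℝ) (ha0 : 0 < a) (ha1 : a ≤ 1) (hh0 : 0 ≤ h) (hh1 : h ≤ 1)
    (hb : b ≠ 0) (h1 : 0 < a ^ 2 * h ^ 4 + b ^ 2 * h ^ 2)
    (h2 : 0 < 1 - 2 * a * h ^ 2 + a ^ 2 * h ^ 4 + b ^ 2 * h ^ 2) :
    0 < 2 * a ^ 2 * h ^ 4 + 2 * b ^ 2 * h ^ 2 - 2 * a * h ^ 2
      + 2 * Real.sqrt (a ^ 2 * h ^ 4 + b ^ 2 * h ^ 2)
        * Real.sqrt (1 - 2 * a * h ^ 2 + a ^ 2 * h ^ 4 + b ^ 2 * h ^ 2) := by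
  set X := a ^ 2 * h ^ 4 + b ^ 2 * h ^ 2 with hX
  set Y := 1 - 2 * a * h ^ 2 + a ^ 2 * h ^ 4 + b ^ 2 * h ^ 2 with hY
  have hSX : 0 < Real.sqrt X := Real.sqrt_pos.mpr h1
  have hSY : 0 < Real.sqrt Y := Real.sqrt_pos.mpr h2
  have hh : h ≠ 0 := by
    intro h0
    rw [hX, h0] at h1; norm_num at h1
  have hb2 : 0 < b ^ 2 * h ^ 2 := by positivity
  have key : a * h ^ 2 - X < Real.sqrt X * Real.sqrt Y := by
    rcases le_or_gt (a * h ^ 2 - X) 0 with hc | hc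
    · exact hc.trans_lt (by positivity)
    · have hsq : (a * h ^ 2 - X) ^ 2 < (Real.sqrt X * Real.sqrt Y) ^ 2 := by
        rw [mul_pow, Real.sq_sqrt h1.le, Real.sq_sqrt h2.le]
        nlinarith [sq_nonneg (a * h ^ 2)]
      exact lt_of_pow_lt_pow_left₀ 2 (by positivity) hsq
  linarith
end

section
/- Let ρ = (1/2)[[1+a, c],[c̄, 1-a]] be a qubit density matrix with a ∈ ℝ, c ∈ ℂ, s := √(a² + |c|²) satisfying 0 < s ≤ 1 and |c| > 0. Then the skew-information coherence equals C_S(ρ) = 1 - [√((1+s)/2)·(s+a)/(2s) + √((1-s)/2)·(s-a)/(2s)]² - [√((1+s)/2)·(s-a)/(2s) + √((1-s)/2)·(s+a)/(2s)]². -/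
set_option maxHeartbeats 1000000


open Matrix ComplexOrder

lemma smul_psd_aux {n : Type*} [Fintype n] {M : Matrix n n ℂ} (hM : M.PosSemidef)
    {t : ℝ} (ht : 0 ≤ t) : ((t : ℂ) • M).PosSemidef := by
  constructor
  · rw [Matrix.IsHermitian, conjTranspose_smul, hM.1]
    simp [Complex.conj_ofReal]
  · intro x
    exact (hM.smul (a := (t : ℂ)) (by exact_mod_cast Complex.zero_le_real.mpr ht)).2 x

theorem skew_info_coherence_phase_damping_formula
    (a : ℝ) (c : ℂ) (s : ℝ)
    (hs : s = Real.sqrt (a ^ 2 + ‖c‖ ^ 2))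
    (hs0 : 0 < s) (hs1 : s ≤ 1) (hc : 0 < ‖c‖)
    (ρ : Matrix (Fin 2) (Fin 2) ℂ)
    (hρ : ρ = (1 / 2 : ℂ) • !![1 + (a : ℂ), c; (starRingEnd ℂ) c, 1 - (a : ℂ)])
    (r : Matrix (Fin 2) (Fin 2) ℂ) (hrPSD : r.PosSemidef) (hr2 : r * r = ρ) :
    1 - (r 0 0).re ^ 2 - (r 1 1).re ^ 2
      = 1 - (Real.sqrt ((1 + s) / 2) * ((s + a) / (2 * s))
              + Real.sqrt ((1 - s) / 2) * ((s - a) / (2 * s))) ^ 2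
          - (Real.sqrt ((1 + s) / 2) * ((s - a) / (2 * s))
              + Real.sqrt ((1 - s) / 2) * ((s + a) / (2 * s))) ^ 2 := by
  set lp := Real.sqrt ((1 + s) / 2) with hlp_def
  set lm := Real.sqrt ((1 - s) / 2) with hlm_def
  set p := (lp + lm) / 2 with hp_def
  set q := (lp - lm) / (2 * s) with hq_def
  have hs2 : s ^ 2 = a ^ 2 + ‖c‖ ^ 2 := by
    rw [hs]; exact Real.sq_sqrt (by positivity)
  have hlp2 : lp ^ 2 = (1 + s) / 2 := Real.sq_sqrt (by linarith)
  have hlm2 : lm ^ 2 = (1 - s) / 2 := Real.sq_sqrt (by linarith)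
  have hlm0 : 0 ≤ lm := Real.sqrt_nonneg _
  have hlp0 : 0 ≤ lp := Real.sqrt_nonneg _
  have hlplm : lm ≤ lp := Real.sqrt_le_sqrt (by linarith)
  have hq0 : 0 ≤ q := div_nonneg (by linarith) (by linarith)
  have h1 : 0 ≤ (1 - s) * lp := mul_nonneg (by linarith) hlp0
  have h2 : 0 ≤ (1 + s) * lm := mul_nonneg (by linarith) hlm0
  have h3 : ((1 - s) * lp) ^ 2 ≤ ((1 + s) * lm) ^ 2 := by nlinarith [hlp2, hlm2]
  have hkey : (1 - s) * lp ≤ (1 + s) * lm := by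
    calc (1 - s) * lp = Real.sqrt (((1 - s) * lp) ^ 2) := (Real.sqrt_sq h1).symm
      _ ≤ Real.sqrt (((1 + s) * lm) ^ 2) := Real.sqrt_le_sqrt h3
      _ = (1 + s) * lm := Real.sqrt_sq h2
  have hpq : 0 ≤ p - q := by
    rw [hp_def, hq_def, sub_nonneg, div_le_div_iff₀ (by positivity) (by norm_num)]
    nlinarith [hkey]
  subst hρ
  have hρPSD : ((1 / 2 : ℂ) •
      !![1 + (a : ℂ), c; (starRingEnd ℂ) c, 1 - (a : ℂ)]).PosSemidef := by
    have h := posSemidef_conjTranspose_mul_self r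
    rw [hrPSD.1, hr2] at h
    exact h
  have key1 : p ^ 2 + q ^ 2 * s ^ 2 = 1 / 2 := by
    rw [hp_def, hq_def]
    field_simp
    nlinarith [hlp2, hlm2]
  have key2 : 2 * (p * q) = 1 / 2 := by
    rw [hp_def, hq_def]
    field_simp
    nlinarith [hlp2, hlm2]
  set R : Matrix (Fin 2) (Fin 2) ℂ := ((p - q : ℝ) : ℂ) • 1 + ((2 * q : ℝ) : ℂ) •
    ((1 / 2 : ℂ) • !![1 + (a : ℂ), c; (starRingEnd ℂ) c, 1 - (a : ℂ)]) with hR_def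
  have hRPSD : R.PosSemidef := (smul_psd_aux Matrix.PosSemidef.one hpq).add
    (smul_psd_aux hρPSD (by linarith))
  have hK1 : (p : ℂ) ^ 2 + (q : ℂ) ^ 2 * (s : ℂ) ^ 2 = 1 / 2 := by
    rw [show ((1 : ℂ) / 2) = ((1 / 2 : ℝ) : ℂ) by norm_num, ← key1]
    push_cast
    ring
  have hK2 : 2 * ((p : ℂ) * (q : ℂ)) = 1 / 2 := by
    rw [show ((1 : ℂ) / 2) = ((1 / 2 : ℝ) : ℂ) by norm_num, ← key2]
    push_cast
    ring
  have hS : (a : ℂ) ^ 2 + ((‖c‖ : ℝ) : ℂ) ^ 2 = (s : ℂ) ^ 2 := by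
    exact_mod_cast congrArg (Complex.ofReal) hs2.symm
  have hC : c * (starRingEnd ℂ) c = ((‖c‖ : ℝ) : ℂ) ^ 2 := by
    rw [Complex.mul_conj, Complex.normSq_eq_norm_sq]
    push_cast
    ring
  have hR2 : R ^ 2 = (1 / 2 : ℂ) • !![1 + (a : ℂ), c; (starRingEnd ℂ) c, 1 - (a : ℂ)] := by
    rw [pow_two, hR_def]
    ext i j
    fin_cases i <;> fin_cases j <;>
      simp [Matrix.mul_apply, Fin.sum_univ_succ, Matrix.one_apply]
    · linear_combination hK1 + (a : ℂ) * hK2 + (q : ℂ) ^ 2 * hS + (q : ℂ) ^ 2 * hC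
    · linear_combination c * hK2
    · linear_combination (starRingEnd ℂ) c * hK2
    · linear_combination hK1 - (a : ℂ) * hK2 + (q : ℂ) ^ 2 * hS + (q : ℂ) ^ 2 * hC
  have hrR : r = R := by
    open scoped MatrixOrder in
    exact (CFC.sq_eq_sq_iff r R hrPSD.nonneg hRPSD.nonneg).mp (by rw [pow_two, hr2, hR2])
  have h00 : r 0 0 = ((p + q * a : ℝ) : ℂ) := by
    rw [hrR, hR_def]
    simp [Matrix.one_apply]
    push_cast
    ring
  have h11 : r 1 1 = ((p - q * a : ℝ) : ℂ) := by
    rw [hrR, hR_def]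
    simp [Matrix.one_apply]
    push_cast
    ring
  rw [h00, h11, Complex.ofReal_re, Complex.ofReal_re]
  have eA : lp * ((s + a) / (2 * s)) + lm * ((s - a) / (2 * s)) = p + q * a := by
    rw [hp_def, hq_def]; field_simp; ring
  have eB : lp * ((s - a) / (2 * s)) + lm * ((s + a) / (2 * s)) = p - q * a := by
    rw [hp_def, hq_def]; field_simp; ring
  rw [eA, eB]
end
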